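/- For every integer q ≥ 2, the function g(x) = (1 − H_q(x/2))/(1 − x) on (0,1) satisfies: (i) the sign of g′(x) equals the sign of x − 2/q for every x ∈ (0,1); and (ii) g″(x) ≥ 0 for every x ∈ (0,1), so g is convex on (0,1). -/

import Mathlib

open Filter Real Set

/-- The q-ary entropy function. -/
noncomputable def qEntropy (q : ℕ) (x : ℝ) : ℝ :=
  x * Real.logb q (((q : ℝ) - 1) / x) + (1 - x) * Real.logb q (1 / (1 - x))

/-- The function `g(x) = (1 - H_q(x/2))/(1-x)`. -/
noncomputable def gHS (q : ℕ) (x : ℝ) : ℝ :=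
  (1 - qEntropy q (x / 2)) / (1 - x)

/-!
Write `g = F / (1 - x)` with `F x = 1 - H_q(x/2)`. Then `g' = N / (1 - x)^2` with
`N = (1 - x) F' + F`, and `N' = (1 - x) F'' > 0` on `(0, 1)` because entropy is concave; since
`N (2/q) = 0`, `g'` has the sign of `x - 2/q`. Next `g'' = M / (1 - x)^3` with
`M = (1 - x)^2 F'' + 2 N`, and `M' = (1 - x)^2 F''' ≤ 0` on `(0, 1]`, where
`F''' ∝ 1/(2 - x)^2 - 1/x^2 ≤ 0`. Hence `M ≥ M 1 = 2 (1 - H_q(1/2)) ≥ 0`, the last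
inequality being `4 (q - 1) ≤ q^2`.
-/

section DivOneSub

variable {F F' F'' : ℝ → ℝ} {x : ℝ}

def slopeNumerator (F F' : ℝ → ℝ) (x : ℝ) : ℝ := F' x * (1 - x) + F x

def curvatureNumerator (F F' F'' : ℝ → ℝ) (x : ℝ) : ℝ :=
  F'' x * (1 - x) ^ 2 + 2 * slopeNumerator F F' x

theorem hasDerivAt_div_one_sub_pow {f' : ℝ} (k : ℕ) (hF : HasDerivAt F f' x) (hx : x ≠ 1) :
    HasDerivAt (fun y => F y / (1 - y) ^ k)
      ((f' * (1 - x) + k * F x) / (1 - x) ^ (k + 1)) x := by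
  have hx' : 1 - x ≠ 0 := sub_ne_zero.2 hx.symm
  have hden := ((hasDerivAt_id x).const_sub 1).fun_pow k
  refine (hF.div hden (pow_ne_zero _ hx')).congr_deriv ?_
  rcases k with _ | k
  · simp [hx']
  · simp only [id, Nat.add_sub_cancel]
    field_simp
    push_cast
    ring

theorem hasDerivAt_div_one_sub (hF : HasDerivAt F (F' x) x) (hx : x ≠ 1) :
    HasDerivAt (fun y => F y / (1 - y)) (slopeNumerator F F' x / (1 - x) ^ 2) x := by
  simpa [slopeNumerator] using hasDerivAt_div_one_sub_pow 1 hF hx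

theorem hasDerivAt_slopeNumerator {f'' : ℝ} (hF : HasDerivAt F (F' x) x)
    (hF' : HasDerivAt F' f'' x) : HasDerivAt (slopeNumerator F F') (f'' * (1 - x)) x :=
  ((hF'.mul ((hasDerivAt_id x).const_sub 1)).add hF).congr_deriv (by simp)

theorem hasDerivAt_slopeNumerator_div (hF : HasDerivAt F (F' x) x)
    (hF' : HasDerivAt F' (F'' x) x) (hx : x ≠ 1) :
    HasDerivAt (fun y => slopeNumerator F F' y / (1 - y) ^ 2)
      (curvatureNumerator F F' F'' x / (1 - x) ^ 3) x :=
  (hasDerivAt_div_one_sub_pow 2 (hasDerivAt_slopeNumerator hF hF') hx).congr_deriv <| by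
    rw [curvatureNumerator]; push_cast; ring

theorem hasDerivAt_curvatureNumerator {f''' : ℝ} (hF : HasDerivAt F (F' x) x)
    (hF' : HasDerivAt F' (F'' x) x) (hF'' : HasDerivAt F'' f''' x) :
    HasDerivAt (curvatureNumerator F F' F'') (f''' * (1 - x) ^ 2) x := by
  have hsq := ((hasDerivAt_id x).const_sub 1).fun_pow 2
  refine ((hF''.mul hsq).add ((hasDerivAt_slopeNumerator hF hF').const_mul 2)).congr_deriv ?_
  simp only [id, Nat.cast_ofNat]
  ring

end DivOneSub

section QaryCapacity

variable {q : ℕ} {p : ℝ}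

-- Mathlib's `qaryEntropy` is measured in nats; dividing by `log q` gives `H_q`.
noncomputable def qaryCapacity (q : ℕ) (p : ℝ) : ℝ := 1 - qaryEntropy q p / log q

noncomputable def qaryCapacityDeriv (q : ℕ) (p : ℝ) : ℝ :=
  (log p - log (q - 1) - log (1 - p)) / log q

noncomputable def qaryCapacityDeriv2 (q : ℕ) (p : ℝ) : ℝ := (p⁻¹ + (1 - p)⁻¹) / log q

theorem qEntropy_eq_qaryEntropy_div_log (hq : q ≠ 1) (x : ℝ) :
    qEntropy q x = qaryEntropy q x / log q := by
  have hq' : (q : ℝ) - 1 ≠ 0 := sub_ne_zero.2 (by exact_mod_cast hq)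
  rcases eq_or_ne x 0 with rfl | hx
  · simp [qEntropy]
  simp only [qEntropy, qaryEntropy, binEntropy, logb, one_div, log_div hq' hx, log_inv]
  push_cast
  ring

theorem hasDerivAt_qaryCapacity (hp0 : p ≠ 0) (hp1 : p ≠ 1) :
    HasDerivAt (qaryCapacity q) (qaryCapacityDeriv q p) p :=
  ((hasDerivAt_qaryEntropy hp0 hp1).div_const (log q) |>.const_sub 1).congr_deriv <| by
    rw [qaryCapacityDeriv]; ring

theorem hasDerivAt_qaryCapacityDeriv (hp0 : p ≠ 0) (hp1 : p ≠ 1) :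
    HasDerivAt (qaryCapacityDeriv q) (qaryCapacityDeriv2 q p) p := by
  have hlog_one_sub := ((hasDerivAt_id p).const_sub 1).log (sub_ne_zero.2 hp1.symm)
  refine ((((hasDerivAt_log hp0).sub_const _).sub hlog_one_sub).div_const (log q)).congr_deriv ?_
  simp only [qaryCapacityDeriv2, id]
  field_simp
  ring

theorem hasDerivAt_qaryCapacityDeriv2 (hp0 : p ≠ 0) (hp1 : p ≠ 1) :
    HasDerivAt (qaryCapacityDeriv2 q) ((((1 - p) ^ 2)⁻¹ - (p ^ 2)⁻¹) / log q) p := by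
  have hinv_one_sub := ((hasDerivAt_id p).const_sub 1).inv (sub_ne_zero.2 hp1.symm)
  refine (((hasDerivAt_inv hp0).add hinv_one_sub).div_const (log q)).congr_deriv ?_
  simp only [id]
  ring

theorem qaryEntropy_two_inv_le_log (hq : 2 ≤ q) : qaryEntropy q 2⁻¹ ≤ log q := by
  have hq' : (2 : ℝ) ≤ q := by exact_mod_cast hq
  have hamgm : log (((q : ℝ) - 1) * 2 ^ 2) ≤ log ((q : ℝ) ^ 2) :=
    log_le_log (by nlinarith) (by nlinarith [sq_nonneg ((q : ℝ) - 2)])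
  rw [log_mul (by linarith) (by norm_num), log_pow, log_pow] at hamgm
  simp only [qaryEntropy, binEntropy_two_inv]
  push_cast at hamgm ⊢
  linarith

theorem qaryCapacity_two_inv_nonneg (hq : 2 ≤ q) : 0 ≤ qaryCapacity q 2⁻¹ := by
  have hlog : 0 < log q := log_pos (by exact_mod_cast hq)
  rw [qaryCapacity, sub_nonneg, div_le_one hlog]
  exact qaryEntropy_two_inv_le_log hq

end QaryCapacity

theorem HasDerivAt.comp_half {f : ℝ → ℝ} {f' x : ℝ} (hf : HasDerivAt f f' (x / 2)) :
    HasDerivAt (fun y => f (y / 2)) (f' / 2) x :=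
  (hf.comp x ((hasDerivAt_id x).div_const 2)).congr_deriv (by ring)

theorem Real.sign_div_of_pos {r c : ℝ} (hc : 0 < c) : Real.sign (r / c) = Real.sign r := by
  rcases lt_trichotomy r 0 with hr | rfl | hr
  · rw [sign_of_neg hr, sign_of_neg (div_neg_of_neg_of_pos hr hc)]
  · simp
  · rw [sign_of_pos hr, sign_of_pos (div_pos hr hc)]

theorem StrictMonoOn.sign_eq_sign_sub {f : ℝ → ℝ} {s : Set ℝ} {a x : ℝ}
    (hf : StrictMonoOn f s) (ha : a ∈ s) (hx : x ∈ s) (hfa : f a = 0) :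
    Real.sign (f x) = Real.sign (x - a) := by
  rcases lt_trichotomy x a with hxa | rfl | hxa
  · rw [sign_of_neg (hfa ▸ hf hx ha hxa), sign_of_neg (sub_neg.2 hxa)]
  · simp [hfa]
  · rw [sign_of_pos (hfa ▸ hf ha hx hxa), sign_of_pos (sub_pos.2 hxa)]

section gHS

variable {q : ℕ} {x : ℝ}

noncomputable def gHSSlope (q : ℕ) : ℝ → ℝ :=
  slopeNumerator (fun x => qaryCapacity q (x / 2)) (fun x => qaryCapacityDeriv q (x / 2) / 2)

noncomputable def gHSCurvature (q : ℕ) : ℝ → ℝ :=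
  curvatureNumerator (fun x => qaryCapacity q (x / 2)) (fun x => qaryCapacityDeriv q (x / 2) / 2)
    (fun x => qaryCapacityDeriv2 q (x / 2) / 4)

theorem gHS_eq (hq : q ≠ 1) : gHS q = fun x => qaryCapacity q (x / 2) / (1 - x) := by
  ext x
  rw [gHS, qaryCapacity, qEntropy_eq_qaryEntropy_div_log hq]

theorem hasDerivAt_qaryCapacity_half (hx0 : x ≠ 0) (hx2 : x ≠ 2) :
    HasDerivAt (fun x => qaryCapacity q (x / 2)) (qaryCapacityDeriv q (x / 2) / 2) x :=
  (hasDerivAt_qaryCapacity (by simpa) (by contrapose! hx2; linarith)).comp_half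

theorem hasDerivAt_qaryCapacityDeriv_half (hx0 : x ≠ 0) (hx2 : x ≠ 2) :
    HasDerivAt (fun x => qaryCapacityDeriv q (x / 2) / 2) (qaryCapacityDeriv2 q (x / 2) / 4) x :=
  ((hasDerivAt_qaryCapacityDeriv (by simpa) (by contrapose! hx2; linarith)).comp_half.div_const
    2).congr_deriv (by ring)

theorem hasDerivAt_qaryCapacityDeriv2_half (hx0 : x ≠ 0) (hx2 : x ≠ 2) :
    HasDerivAt (fun x => qaryCapacityDeriv2 q (x / 2) / 4)
      ((((1 - x / 2) ^ 2)⁻¹ - ((x / 2) ^ 2)⁻¹) / log q / 8) x :=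
  ((hasDerivAt_qaryCapacityDeriv2 (by simpa) (by contrapose! hx2; linarith)).comp_half.div_const
    4).congr_deriv (by ring)

theorem hasDerivAt_gHS (hq : q ≠ 1) (hx0 : x ≠ 0) (hx1 : x ≠ 1) (hx2 : x ≠ 2) :
    HasDerivAt (gHS q) (gHSSlope q x / (1 - x) ^ 2) x := by
  rw [gHS_eq hq]
  exact hasDerivAt_div_one_sub (F' := fun x => qaryCapacityDeriv q (x / 2) / 2)
    (hasDerivAt_qaryCapacity_half hx0 hx2) hx1

theorem hasDerivAt_gHSSlope (hx0 : x ≠ 0) (hx2 : x ≠ 2) :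
    HasDerivAt (gHSSlope q) (qaryCapacityDeriv2 q (x / 2) / 4 * (1 - x)) x := by
  unfold gHSSlope
  exact hasDerivAt_slopeNumerator (hasDerivAt_qaryCapacity_half hx0 hx2)
    (hasDerivAt_qaryCapacityDeriv_half hx0 hx2)

theorem hasDerivAt_gHSSlope_div (hx0 : x ≠ 0) (hx1 : x ≠ 1) (hx2 : x ≠ 2) :
    HasDerivAt (fun y => gHSSlope q y / (1 - y) ^ 2) (gHSCurvature q x / (1 - x) ^ 3) x :=
  hasDerivAt_slopeNumerator_div (F'' := fun x => qaryCapacityDeriv2 q (x / 2) / 4)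
    (hasDerivAt_qaryCapacity_half hx0 hx2)
    (hasDerivAt_qaryCapacityDeriv_half hx0 hx2) hx1

theorem hasDerivAt_gHSCurvature (hx0 : x ≠ 0) (hx2 : x ≠ 2) :
    HasDerivAt (gHSCurvature q)
      ((((1 - x / 2) ^ 2)⁻¹ - ((x / 2) ^ 2)⁻¹) / log q / 8 * (1 - x) ^ 2) x := by
  unfold gHSCurvature
  exact hasDerivAt_curvatureNumerator (hasDerivAt_qaryCapacity_half hx0 hx2)
    (hasDerivAt_qaryCapacityDeriv_half hx0 hx2) (hasDerivAt_qaryCapacityDeriv2_half hx0 hx2)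

theorem strictMonoOn_gHSSlope (hq : 1 < q) : StrictMonoOn (gHSSlope q) (Ioc 0 1) := by
  have hlog : 0 < log q := log_pos (by exact_mod_cast hq)
  have hderiv : ∀ x ∈ Ioc (0 : ℝ) 1,
      HasDerivAt (gHSSlope q) (qaryCapacityDeriv2 q (x / 2) / 4 * (1 - x)) x :=
    fun x hx => hasDerivAt_gHSSlope hx.1.ne' (by linarith [hx.2])
  refine strictMonoOn_of_hasDerivWithinAt_pos (convex_Ioc 0 1)
    (f' := fun x => qaryCapacityDeriv2 q (x / 2) / 4 * (1 - x))
    (fun x hx => (hderiv x hx).continuousAt.continuousWithinAt) ?_ ?_ <;> rw [interior_Ioc]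
  · exact fun x hx => (hderiv x (Ioo_subset_Ioc_self hx)).hasDerivWithinAt
  rintro x ⟨hx0, hx1⟩
  have : 0 < 1 - x / 2 := by linarith
  have : 0 < 1 - x := by linarith
  unfold qaryCapacityDeriv2
  positivity

theorem antitoneOn_gHSCurvature (hq : 1 < q) : AntitoneOn (gHSCurvature q) (Ioc 0 1) := by
  have hlog : 0 < log q := log_pos (by exact_mod_cast hq)
  have hderiv : ∀ x ∈ Ioc (0 : ℝ) 1, HasDerivAt (gHSCurvature q)
      ((((1 - x / 2) ^ 2)⁻¹ - ((x / 2) ^ 2)⁻¹) / log q / 8 * (1 - x) ^ 2) x :=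
    fun x hx => hasDerivAt_gHSCurvature hx.1.ne' (by linarith [hx.2])
  refine antitoneOn_of_hasDerivWithinAt_nonpos (convex_Ioc 0 1)
    (f' := fun x => (((1 - x / 2) ^ 2)⁻¹ - ((x / 2) ^ 2)⁻¹) / log q / 8 * (1 - x) ^ 2)
    (fun x hx => (hderiv x hx).continuousAt.continuousWithinAt) ?_ ?_ <;> rw [interior_Ioc]
  · exact fun x hx => (hderiv x (Ioo_subset_Ioc_self hx)).hasDerivWithinAt
  rintro x ⟨hx0, hx1⟩
  have hsq : ((1 - x / 2) ^ 2)⁻¹ ≤ ((x / 2) ^ 2)⁻¹ :=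
    inv_anti₀ (by positivity) (pow_le_pow_left₀ (by positivity) (by linarith) 2)
  have : (((1 - x / 2) ^ 2)⁻¹ - ((x / 2) ^ 2)⁻¹) / log q / 8 ≤ 0 :=
    div_nonpos_of_nonpos_of_nonneg (div_nonpos_of_nonpos_of_nonneg (by linarith) hlog.le)
      (by norm_num)
  exact mul_nonpos_of_nonpos_of_nonneg this (sq_nonneg _)

theorem gHSSlope_two_div (hq : 1 < q) : gHSSlope q (2 / q) = 0 := by
  have hq' : (1 : ℝ) < q := by exact_mod_cast hq
  have hlog : log q ≠ 0 := (log_pos hq').ne'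
  have hhalf : 2 / (q : ℝ) / 2 = (q : ℝ)⁻¹ := by ring
  have hlog_one_sub : log (1 - (q : ℝ)⁻¹) = log (q - 1) - log q := by
    rw [← log_div (by linarith) (by positivity)]
    congr 1
    field_simp
  simp only [gHSSlope, slopeNumerator, qaryCapacity, qaryCapacityDeriv, qaryEntropy, binEntropy,
    hhalf, inv_inv, log_inv, hlog_one_sub]
  push_cast
  field_simp
  ring

theorem gHSCurvature_one : gHSCurvature q 1 = 2 * qaryCapacity q 2⁻¹ := by
  simp [gHSCurvature, curvatureNumerator, slopeNumerator]

theorem gHSCurvature_nonneg (hq : 2 ≤ q) (hx : x ∈ Ioc 0 1) : 0 ≤ gHSCurvature q x := by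
  calc 0 ≤ 2 * qaryCapacity q 2⁻¹ := mul_nonneg zero_le_two (qaryCapacity_two_inv_nonneg hq)
    _ = gHSCurvature q 1 := gHSCurvature_one.symm
    _ ≤ gHSCurvature q x := antitoneOn_gHSCurvature hq hx ⟨one_pos, le_rfl⟩ hx.2

end gHS

theorem stmt8 (q : ℕ) (hq : 2 ≤ q) :
    (∀ x ∈ Set.Ioo (0 : ℝ) 1,
      Real.sign (deriv (gHS q) x) = Real.sign (x - 2 / (q : ℝ))) ∧
    (∀ x ∈ Set.Ioo (0 : ℝ) 1, 0 ≤ deriv (deriv (gHS q)) x) ∧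
    ConvexOn ℝ (Set.Ioo (0 : ℝ) 1) (gHS q) := by
  have hq' : (2 : ℝ) ≤ q := by exact_mod_cast hq
  have hg' : ∀ x ∈ Ioo (0 : ℝ) 1, HasDerivAt (gHS q) (gHSSlope q x / (1 - x) ^ 2) x :=
    fun x hx => hasDerivAt_gHS (by omega) hx.1.ne' hx.2.ne (by linarith [hx.2])
  have hg'' : ∀ x ∈ Ioo (0 : ℝ) 1,
      HasDerivAt (fun y => gHSSlope q y / (1 - y) ^ 2) (gHSCurvature q x / (1 - x) ^ 3) x :=
    fun x hx => hasDerivAt_gHSSlope_div hx.1.ne' hx.2.ne (by linarith [hx.2])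
  have hg''_nonneg : ∀ x ∈ Ioo (0 : ℝ) 1, 0 ≤ gHSCurvature q x / (1 - x) ^ 3 := fun x hx =>
    div_nonneg (gHSCurvature_nonneg hq (Ioo_subset_Ioc_self hx))
      (pow_nonneg (by linarith [hx.2]) 3)
  refine ⟨fun x hx => ?_, fun x hx => ?_, ?_⟩
  · have hslope := (strictMonoOn_gHSSlope hq).sign_eq_sign_sub
      ⟨by positivity, (div_le_one (by positivity)).2 hq'⟩ (Ioo_subset_Ioc_self hx)
      (gHSSlope_two_div hq)
    rw [(hg' x hx).deriv, Real.sign_div_of_pos (pow_pos (by linarith [hx.2]) 2), hslope]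
  · have hderiv : deriv (gHS q) =ᶠ[nhds x] fun y => gHSSlope q y / (1 - y) ^ 2 :=
      eventually_of_mem (isOpen_Ioo.mem_nhds hx) fun y hy => (hg' y hy).deriv
    rw [((hg'' x hx).congr_of_eventuallyEq hderiv).deriv]
    exact hg''_nonneg x hx
  · refine convexOn_of_hasDerivWithinAt2_nonneg (convex_Ioo 0 1)
      (f' := fun y => gHSSlope q y / (1 - y) ^ 2) (f'' := fun x => gHSCurvature q x / (1 - x) ^ 3)
      (fun x hx => (hg' x hx).continuousAt.continuousWithinAt) ?_ ?_ ?_ <;> rw [interior_Ioo]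
    · exact fun x hx => (hg' x hx).hasDerivWithinAt
    · exact fun x hx => (hg'' x hx).hasDerivWithinAt
    · exact hg''_nonneg
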